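/- arXiv:1307.7666 — 2 statements merged into one kernel-verified Lean document; each statement's English description precedes it below -/
import Mathlib

section
/- Coupon collector asymptotics: let X_m be the number of i.i.d. uniform draws from {1,…,m} needed until every element of {1,…,m} has been drawn at least once. Then for any fixed constant c ∈ ℝ, with n(m) = m·log m - c·m, one has lim_{m→∞} P(X_m > n(m)) = 1 - exp(-exp(c)). -/
/-!
Inclusion–exclusion over the set of missed coupons gives
`P(X_m > n) = 1 - ∑_{k ≤ m} (-1)^k C(m,k) (1 - k/m)^n`.
When `log m - n/m → c`, the `k`-th term tends to `(-1)^k e^{kc} / k!`: indeed `C(m,k) ~ m^k / k!`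
and `m^k (1 - k/m)^n = exp (k (log m - n/m) + O(k² n / m²))`. Since `(1 - k/m)^n ≤ e^{-kn/m}`,
the terms are also bounded by `e^{k(c+1)} / k!` for all large `m`, uniformly in `k`, so Tannery's
theorem gives the limit `1 - ∑_k (-1)^k e^{kc} / k! = 1 - exp (-e^c)`.
-/

open Real Filter

/-- The probability, under i.i.d. uniform draws `X_1, …, X_n` from `{1,…,m}`
(equivalently, a uniformly random function `Fin n → Fin m`), that some coupon
is missed, i.e. that the first `n` draws do not cover `{1,…,m}`; this is the
event `{X_m > n}` where `X_m` is the coupon-collector stopping time. -/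
noncomputable def couponMissProb (m n : ℕ) : ℝ :=
  (Nat.card {f : Fin n → Fin m // ¬ Function.Surjective f} : ℝ) / (m : ℝ) ^ n

open Finset Topology

theorem Nat.card_surjective_eq_sum (α β : Type*) [Fintype α] [Fintype β] :
    (Nat.card {f : α → β // Function.Surjective f} : ℤ) =
      ∑ k ∈ range (Fintype.card β + 1),
        (-1) ^ k * (Fintype.card β).choose k *
          ((Fintype.card β - k : ℕ) : ℤ) ^ Fintype.card α := by
  classical
  let avoiding (t : Finset β) : Finset (α → β) := Fintype.piFinset fun _ => tᶜ
  have h_surj : univ.filter (fun f : α → β => Function.Surjective f) =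
      univ.inf fun b => (avoiding {b})ᶜ := by
    ext f
    simp [avoiding, Function.Surjective, Finset.mem_inf, eq_comm]
  have h_inf (t : Finset β) : t.inf (fun b => avoiding {b}) = avoiding t := by
    ext f
    simp only [avoiding, Finset.mem_inf, Fintype.mem_piFinset, mem_compl, mem_singleton]
    grind
  have h_card (t : Finset β) : #(avoiding t) = (Fintype.card β - #t) ^ Fintype.card α := by
    simp [avoiding, card_compl]
  rw [Nat.card_eq_fintype_card, Fintype.card_subtype, h_surj, inclusion_exclusion_card_inf_compl]
  simp only [h_inf, h_card, Nat.cast_pow]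
  rw [sum_powerset_apply_card
    (fun k => (-1 : ℤ) ^ k * ((Fintype.card β - k : ℕ) : ℤ) ^ Fintype.card α)]
  simp only [Finset.card_univ, nsmul_eq_mul]
  exact Finset.sum_congr rfl fun k _ => by ring

theorem couponMissProb_eq_one_sub_sum (m n : ℕ) :
    couponMissProb m n =
      1 - ∑ k ∈ range (m + 1), (-1) ^ k * m.choose k * (1 - k / m : ℝ) ^ n := by
  rcases Nat.eq_zero_or_pos m with rfl | hm
  · rcases Nat.eq_zero_or_pos n with rfl | hn
    · simp [couponMissProb, Function.Surjective]
    · simp [couponMissProb, zero_pow hn.ne']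
  have h_compl : (Nat.card {f : Fin n → Fin m // ¬ Function.Surjective f} : ℝ) =
      m ^ n - Nat.card {f : Fin n → Fin m // Function.Surjective f} := by
    classical
    simp only [Nat.card_eq_fintype_card, Fintype.card_subtype_compl, Fintype.card_fun,
      Fintype.card_fin]
    rw [Nat.cast_sub, Nat.cast_pow]
    simpa using Fintype.card_subtype_le (Function.Surjective (α := Fin n) (β := Fin m))
  have h_surj : (Nat.card {f : Fin n → Fin m // Function.Surjective f} : ℝ) =
      ∑ k ∈ range (m + 1), (-1) ^ k * m.choose k * ((m : ℝ) - k) ^ n := by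
    have := Nat.card_surjective_eq_sum (Fin n) (Fin m)
    simp only [Fintype.card_fin] at this
    rw [← Int.cast_natCast, this]
    push_cast
    refine Finset.sum_congr rfl fun k hk => ?_
    rw [Nat.cast_sub (Nat.lt_succ_iff.1 (mem_range.1 hk))]
  have hm' : (m : ℝ) ≠ 0 := by positivity
  rw [couponMissProb, h_compl, h_surj, sub_div, div_self (by positivity), sum_div]
  congr 1
  refine Finset.sum_congr rfl fun k _ => ?_
  rw [mul_div_assoc, ← div_pow, sub_div, div_self hm']

theorem couponMissProb_eq_one_sub_tsum (m n : ℕ) :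
    couponMissProb m n = 1 - ∑' k : ℕ, (-1) ^ k * (m.choose k * (1 - k / m : ℝ) ^ n) := by
  rw [couponMissProb_eq_one_sub_sum, tsum_eq_sum (s := range (m + 1))]
  · simp only [mul_assoc]
  · intro k hk
    rw [Nat.choose_eq_zero_of_lt (by simpa using hk), Nat.cast_zero, zero_mul, mul_zero]

theorem abs_log_one_sub_add_le {x : ℝ} (hx : |x| ≤ 1 / 2) :
    |log (1 - x) + x| ≤ 2 * x ^ 2 := by
  have h := abs_log_sub_add_sum_range_le (hx.trans_lt (by norm_num)) 1
  simp only [range_one, sum_singleton, zero_add, pow_one, Nat.cast_zero, div_one] at h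
  calc |log (1 - x) + x| = |x + log (1 - x)| := by rw [add_comm]
    _ ≤ |x| ^ 2 / (1 - |x|) := h
    _ ≤ |x| ^ 2 / (1 / 2) := by gcongr; linarith
    _ = 2 * x ^ 2 := by rw [sq_abs]; ring

theorem tendsto_mul_log_one_sub_add {α : Type*} {l : Filter α} {N x : α → ℝ}
    (hx : Tendsto x l (𝓝 0)) (hNx : Tendsto (fun a => N a * x a ^ 2) l (𝓝 0)) :
    Tendsto (fun a => N a * (log (1 - x a) + x a)) l (𝓝 0) := by
  have h_small : ∀ᶠ a in l, |x a| ≤ 1 / 2 := by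
    simpa using hx.abs.eventually (ge_mem_nhds (by norm_num : |(0 : ℝ)| < 1 / 2))
  refine squeeze_zero_norm' ?_ (by simpa using (hNx.norm.const_mul 2))
  filter_upwards [h_small] with a ha
  simp only [norm_mul, Real.norm_eq_abs]
  calc |N a| * |log (1 - x a) + x a| ≤ |N a| * (2 * x a ^ 2) := by
        gcongr; exact abs_log_one_sub_add_le ha
    _ = 2 * (|N a| * x a ^ 2) := by ring

section

variable {c : ℝ} {n : ℕ → ℕ}

theorem tendsto_div_sq_of_tendsto_log_sub_div
    (hn : Tendsto (fun m : ℕ => log m - n m / m) atTop (𝓝 c)) :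
    Tendsto (fun m : ℕ => (n m : ℝ) / m ^ 2) atTop (𝓝 0) := by
  have h_log : Tendsto (fun m : ℕ => log m / m) atTop (𝓝 0) :=
    isLittleO_log_id_atTop.tendsto_div_nhds_zero.comp tendsto_natCast_atTop_atTop
  have := h_log.sub (hn.div_atTop tendsto_natCast_atTop_atTop)
  simpa only [sub_zero, ← sub_div, sub_sub_cancel, div_div, ← sq] using this

theorem tendsto_pow_mul_one_sub_div_pow
    (hn : Tendsto (fun m : ℕ => log m - n m / m) atTop (𝓝 c)) (k : ℕ) :
    Tendsto (fun m : ℕ => (m : ℝ) ^ k * (1 - k / m) ^ n m) atTop (𝓝 (exp (k * c))) := by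
  have h_rem : Tendsto (fun m : ℕ => (n m : ℝ) * (log (1 - k / m) + k / m)) atTop (𝓝 0) := by
    refine tendsto_mul_log_one_sub_add (tendsto_const_div_atTop_nhds_zero_nat _) ?_
    have : (fun m : ℕ => (n m : ℝ) * (k / m) ^ 2) =
        fun m : ℕ => k ^ 2 * ((n m : ℝ) / m ^ 2) := funext fun m => by ring
    simpa [this] using (tendsto_div_sq_of_tendsto_log_sub_div hn).const_mul ((k : ℝ) ^ 2)
  have h_exp :
      (fun m : ℕ => exp (k * (log m - n m / m) + n m * (log (1 - k / m) + k / m))) =ᶠ[atTop]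
        fun m : ℕ => (m : ℝ) ^ k * (1 - k / m) ^ n m := by
    filter_upwards [eventually_gt_atTop k] with m hkm
    have hm : (0 : ℝ) < m := by exact_mod_cast (Nat.zero_le k).trans_lt hkm
    have h_pos : (0 : ℝ) < 1 - k / m := by
      rw [sub_pos, div_lt_one hm]; exact_mod_cast hkm
    have : k * (log m - n m / m) + n m * (log (1 - k / m) + k / m) =
        k * log m + n m * log (1 - k / m) := by
      field_simp
      ring
    rw [this, exp_add, exp_nat_mul, exp_nat_mul, exp_log hm, exp_log h_pos]
  refine Tendsto.congr' h_exp ?_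
  simpa using ((hn.const_mul (k : ℝ)).add h_rem).rexp

open Asymptotics in
theorem tendsto_choose_mul_one_sub_div_pow
    (hn : Tendsto (fun m : ℕ => log m - n m / m) atTop (𝓝 c)) (k : ℕ) :
    Tendsto (fun m : ℕ => (m.choose k : ℝ) * (1 - k / m) ^ n m) atTop
      (𝓝 (exp (k * c) / k.factorial)) := by
  have h_equiv : (fun m : ℕ => (m.choose k : ℝ) * (1 - k / m) ^ n m) ~[atTop]
      fun m : ℕ => (m : ℝ) ^ k * (1 - k / m) ^ n m / k.factorial :=
    ((isEquivalent_choose k).mul IsEquivalent.refl).congr_right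
      (.of_eq (by ext; simp only [Pi.mul_apply]; ring))
  exact h_equiv.tendsto_nhds_iff.mpr ((tendsto_pow_mul_one_sub_div_pow hn k).div_const _)

end

theorem choose_mul_abs_one_sub_div_pow_le {m : ℕ} (hm : 0 < m) (k N : ℕ) :
    (m.choose k : ℝ) * |1 - (k : ℝ) / m| ^ N ≤ exp (k * (log m - N / m)) / k.factorial := by
  rcases lt_or_ge m k with hmk | hkm
  · rw [Nat.choose_eq_zero_of_lt hmk, Nat.cast_zero, zero_mul]
    positivity
  have hm' : (0 : ℝ) < m := by exact_mod_cast hm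
  have h_nonneg : 0 ≤ 1 - (k : ℝ) / m := by
    rw [sub_nonneg, div_le_one hm']; exact_mod_cast hkm
  have h_pow : |1 - (k : ℝ) / m| ^ N ≤ exp (-(k * (N / m))) := by
    rw [abs_of_nonneg h_nonneg, show -(k * (N / m) : ℝ) = N * (-(k / m)) by ring, exp_nat_mul]
    gcongr
    linarith [add_one_le_exp (-(k / m : ℝ))]
  calc (m.choose k : ℝ) * |1 - (k : ℝ) / m| ^ N
      ≤ (m ^ k / k.factorial) * exp (-(k * (N / m))) := by
        gcongr
        exact Nat.choose_le_pow_div k m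
    _ = exp (k * (log m - N / m)) / k.factorial := by
        rw [mul_sub, exp_sub, exp_nat_mul, exp_log hm', exp_neg]
        ring

theorem hasSum_neg_one_pow_mul_exp_mul_div_factorial (c : ℝ) :
    HasSum (fun k : ℕ => (-1) ^ k * (exp (k * c) / k.factorial)) (exp (-exp c)) := by
  have h := NormedSpace.expSeries_div_hasSum_exp (𝔸 := ℝ) (-exp c)
  rw [← Real.exp_eq_exp_ℝ] at h
  refine h.congr_fun fun k => ?_
  rw [neg_pow, exp_nat_mul]
  ring

theorem tendsto_couponMissProb {c : ℝ} {n : ℕ → ℕ}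
    (hn : Tendsto (fun m : ℕ => log m - n m / m) atTop (𝓝 c)) :
    Tendsto (fun m => couponMissProb m (n m)) atTop (𝓝 (1 - exp (-exp c))) := by
  simp only [couponMissProb_eq_one_sub_tsum]
  rw [← (hasSum_neg_one_pow_mul_exp_mul_div_factorial c).tsum_eq]
  refine (tendsto_const_nhds (x := (1 : ℝ))).sub (tendsto_tsum_of_dominated_convergence
    (Real.summable_pow_div_factorial (exp (c + 1)))
    (fun k => (tendsto_choose_mul_one_sub_div_pow hn k).const_mul _) ?_)
  filter_upwards [eventually_gt_atTop 0, hn.eventually (eventually_le_nhds (lt_add_one c))]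
    with m hm h_le k
  rw [norm_mul, norm_pow, norm_neg, norm_one, one_pow, one_mul, norm_mul, norm_pow,
    Real.norm_natCast, Real.norm_eq_abs, ← exp_nat_mul]
  refine (choose_mul_abs_one_sub_div_pow_le hm k (n m)).trans ?_
  gcongr

theorem tendsto_log_sub_floor_div (c : ℝ) :
    Tendsto (fun m : ℕ => log m - ⌊(m : ℝ) * log m - c * m⌋₊ / m) atTop (𝓝 c) := by
  have h_upper : Tendsto (fun m : ℕ => c + 1 / m) atTop (𝓝 c) := by
    simpa using (tendsto_const_nhds (x := c)).add tendsto_one_div_atTop_nhds_zero_nat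
  refine tendsto_of_tendsto_of_tendsto_of_le_of_le' tendsto_const_nhds h_upper ?_ ?_
  all_goals
    filter_upwards [eventually_gt_atTop 0,
      (tendsto_log_atTop.comp tendsto_natCast_atTop_atTop).eventually_ge_atTop c] with m hm h_log
    have hm' : (0 : ℝ) < m := by exact_mod_cast hm
    have h_nonneg : 0 ≤ (m : ℝ) * log m - c * m := by
      have := mul_nonneg hm'.le (sub_nonneg.2 h_log)
      simp only [Function.comp_apply] at this
      linarith
  · have h_floor := Nat.floor_le h_nonneg
    have : (⌊(m : ℝ) * log m - c * m⌋₊ : ℝ) / m ≤ log m - c := by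
      rw [div_le_iff₀ hm']; linarith
    linarith
  · have h_floor := Nat.sub_one_lt_floor ((m : ℝ) * log m - c * m)
    have : log m - c - 1 / m ≤ (⌊(m : ℝ) * log m - c * m⌋₊ : ℝ) / m := by
      rw [le_div_iff₀ hm', sub_mul, sub_mul, one_div_mul_cancel hm'.ne']; linarith
    linarith

/-- Coupon collector asymptotics (Motwani–Raghavan, Thm 3.8): for any fixed `c ∈ ℝ`,
with `n(m) = m·log m - c·m` draws, `P(X_m > n(m)) → 1 - exp(-exp(c))` as `m → ∞`. -/
theorem coupon_collector_limit (c : ℝ) :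
    Tendsto (fun m : ℕ => couponMissProb m ⌊(m : ℝ) * Real.log m - c * m⌋₊)
      atTop (nhds (1 - Real.exp (-Real.exp c))) :=
  tendsto_couponMissProb (tendsto_log_sub_floor_div c)
end

section
/- Sample complexity lower bound for homology inference (combinatorial core): fix δ ∈ (0,1) and let m → ∞. If the sample size satisfies n ≤ m·log m + m·log(1/δ), then any test between H_0 (uniform on m equal-mass components) and the uniform mixture of the m 'one-component-removed' alternatives has total risk at least (1 - e^{-1})·δ in the limit; hence the minimax estimation risk for the number of connected components is at least ((1 - e^{-1})/2)·δ. -/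
/-!
Call a sample of `N` component labels *missing `i`* if no label equals `i`. On that event the
null law of the sample is `((m - 1) / m) ^ N` times the `i`-th alternative, and for
`N ≥ m log (m / δ)` this factor is at most `1 / m`; hence the mixture of alternatives dominates
`H₀` on non-surjective samples, and every test has risk at least `P₀ (some label is missing)`.
Inclusion–exclusion truncated at an even order bounds this probability from below by
`1 - ∑_{j ≤ L} (-1) ^ j C(m, j) (1 - j / m) ^ N`, which tends to `1 - ∑_{j ≤ L} (-δ) ^ j / j!`
as `m → ∞` because `C(m, j) (1 - j / m) ^ N → δ ^ j / j!`. By strict convexity of `exp`,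
`1 - e^{-δ} > (1 - e⁻¹) δ`, so a large even `L` suffices. Fewer samples only increase the risk
(a test on `n` samples is a test on `N ≥ n` samples ignoring the rest), and an estimator of the
number of components gives a test whose risk is at most twice its own.
-/

open MeasureTheory ENNReal Real Filter Finset Function Topology Asymptotics

namespace HomologyInference

theorem measurePreserving_comp_right_of_injective {ι κ α : Type*} [Fintype ι] [Fintype κ]
    [MeasurableSpace α] (μ : Measure α) [IsProbabilityMeasure μ] {e : ι → κ} (he : Injective e) :
    MeasurePreserving (fun x : κ → α => x ∘ e) (Measure.pi fun _ => μ) (Measure.pi fun _ => μ) := by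
  have hmeas : Measurable (fun x : κ → α => x ∘ e) := by fun_prop
  refine ⟨hmeas, (Measure.pi_eq fun s hs => ?_).symm⟩
  have hpre : (fun x : κ → α => x ∘ e) ⁻¹' Set.univ.pi s
      = Set.univ.pi (extend e s fun _ => Set.univ) := by
    ext x
    simp only [Set.mem_preimage, Set.mem_univ_pi, comp_apply]
    refine ⟨fun hx k => ?_, fun hx i => by simpa [he.extend_apply] using hx (e i)⟩
    by_cases hk : ∃ i, e i = k
    · obtain ⟨i, rfl⟩ := hk
      simpa [he.extend_apply] using hx i
    · simp [extend_apply' _ _ _ hk]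
  rw [Measure.map_apply hmeas (.univ_pi hs), hpre, Measure.pi_pi]
  refine (Fintype.prod_of_injective e he _ _ (fun k hk => ?_)
    (fun i => by rw [he.extend_apply])).symm
  rw [extend_apply' _ _ _ (by simpa using hk), measure_univ]

theorem pi_const_smul {ι α : Type*} [Fintype ι] [MeasurableSpace α] (μ : Measure α)
    [SigmaFinite μ] {c : ℝ≥0∞} (hc : c ≠ ∞) :
    Measure.pi (fun _ : ι => c • μ) = c ^ Fintype.card ι • Measure.pi fun _ => μ := by
  lift c to NNReal using hc
  have : SigmaFinite ((c : ℝ≥0∞) • μ) := SMul.sigmaFinite (μ := μ) c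
  refine Measure.pi_eq fun s _ => ?_
  simp [Measure.pi_pi, Finset.prod_mul_distrib]

theorem ite_zero_le_alternating_sum_range_choose {K L : ℕ} (hL : Even L) :
    (if K = 0 then 1 else 0 : ℤ) ≤ ∑ j ∈ range (L + 1), (-1) ^ j * (K.choose j : ℤ) := by
  cases K with
  | zero => simp [Finset.sum_range_succ']
  | succ K => simp [Int.alternating_sum_range_choose_eq_choose, hL.neg_one_pow]

section Surjections

variable {ι α : Type*} [Fintype ι] [DecidableEq ι] [Fintype α] [DecidableEq α]

theorem card_forall_notMem (S : Finset α) :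
    #{x : ι → α | ∀ k, x k ∉ S} = (Fintype.card α - #S) ^ Fintype.card ι := by
  rw [← Fintype.card_subtype, Fintype.card_congr (Equiv.subtypePiEquivPi (p := fun _ b => b ∉ S)),
    Fintype.card_fun, Fintype.card_subtype_compl, Fintype.card_coe]

theorem sum_choose_card_compl_image (j : ℕ) :
    ∑ x : ι → α, (univ.image x)ᶜ.card.choose j
      = (Fintype.card α).choose j * (Fintype.card α - j) ^ Fintype.card ι := by
  have hsub (x : ι → α) (S : Finset α) : S ⊆ (univ.image x)ᶜ ↔ ∀ k, x k ∉ S := by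
    simp only [subset_iff, mem_compl, mem_image, mem_univ, true_and, not_exists]
    exact ⟨fun h k hk => h hk k rfl, fun h a ha k hk => h k (hk ▸ ha)⟩
  calc ∑ x : ι → α, (univ.image x)ᶜ.card.choose j
      = ∑ x : ι → α, ∑ S ∈ powersetCard j univ, if S ⊆ (univ.image x)ᶜ then 1 else 0 := by
        refine sum_congr rfl fun x _ => ?_
        rw [sum_boole, ← card_powersetCard, Nat.cast_id]
        congr 1
        ext S
        simp [mem_powersetCard, and_comm]
    _ = ∑ S ∈ powersetCard j (univ : Finset α), (Fintype.card α - j) ^ Fintype.card ι := by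
        rw [sum_comm]
        refine sum_congr rfl fun S hS => ?_
        simp_rw [hsub, sum_boole, Nat.cast_id, card_forall_notMem, (mem_powersetCard.1 hS).2]
    _ = _ := by rw [sum_const, card_powersetCard, card_univ, smul_eq_mul]

theorem card_surjective_le_of_even {L : ℕ} (hL : Even L) :
    (#{x : ι → α | Surjective x} : ℤ)
      ≤ ∑ j ∈ range (L + 1), (-1) ^ j * (Fintype.card α).choose j
          * ((Fintype.card α - j : ℕ) : ℤ) ^ Fintype.card ι := by
  have hsurj (x : ι → α) : Surjective x ↔ (univ.image x)ᶜ.card = 0 := by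
    simp [Surjective, eq_univ_iff_forall]
  calc (#{x : ι → α | Surjective x} : ℤ)
      = ∑ x : ι → α, if (univ.image x)ᶜ.card = 0 then 1 else 0 := by
        simp_rw [hsurj]; push_cast [card_filter]; rfl
    _ ≤ ∑ x : ι → α, ∑ j ∈ range (L + 1), (-1) ^ j * ((univ.image x)ᶜ.card.choose j : ℤ) :=
        sum_le_sum fun x _ => ite_zero_le_alternating_sum_range_choose hL
    _ = _ := by
        rw [sum_comm]
        refine sum_congr rfl fun j _ => ?_
        rw [← mul_sum, mul_assoc]
        congr 1
        exact_mod_cast sum_choose_card_compl_image j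

end Surjections

noncomputable def nullMeasure (m : ℕ) : Measure (Fin m) := (m : ℝ≥0∞)⁻¹ • Measure.count

noncomputable def altMeasure (m : ℕ) (i : Fin m) : Measure (Fin m) :=
  ((m - 1 : ℕ) : ℝ≥0∞)⁻¹ • Measure.count.restrict {i}ᶜ

instance (m : ℕ) [NeZero m] : IsProbabilityMeasure (nullMeasure m) :=
  ⟨by simpa [nullMeasure] using ENNReal.inv_mul_cancel (NeZero.ne (m : ℝ≥0∞)) (natCast_ne_top m)⟩

theorem count_compl_singleton {m : ℕ} (i : Fin m) :
    Measure.count ({i}ᶜ : Set (Fin m)) = (m - 1 : ℕ) := by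
  rw [← Finset.coe_singleton, ← Finset.coe_compl, Measure.count_apply_finset, card_compl]
  simp

theorem isProbabilityMeasure_altMeasure {m : ℕ} (hm : 1 < m) (i : Fin m) :
    IsProbabilityMeasure (altMeasure m i) :=
  ⟨by
    rw [altMeasure, Measure.smul_apply, Measure.restrict_apply_univ, count_compl_singleton]
    exact ENNReal.inv_mul_cancel (Nat.cast_ne_zero.mpr (by omega)) (natCast_ne_top _)⟩

theorem nullMeasure_restrict_compl_singleton {m : ℕ} (hm : 1 < m) (i : Fin m) :
    (nullMeasure m).restrict {i}ᶜ = ((m - 1 : ℕ) / m : ℝ≥0∞) • altMeasure m i := by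
  rw [nullMeasure, altMeasure, Measure.restrict_smul, smul_smul, div_eq_mul_inv,
    mul_comm _ (m : ℝ≥0∞)⁻¹, mul_assoc,
    ENNReal.mul_inv_cancel (Nat.cast_ne_zero.mpr (by omega)) (natCast_ne_top _), mul_one]

theorem nullSample_restrict_avoid {ι : Type*} [Fintype ι] {m : ℕ} (hm : 1 < m) (i : Fin m) :
    (Measure.pi fun _ : ι => nullMeasure m).restrict {x | ∀ k, x k ≠ i}
      = ((m - 1 : ℕ) / m : ℝ≥0∞) ^ Fintype.card ι • Measure.pi fun _ => altMeasure m i := by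
  have : IsProbabilityMeasure (altMeasure m i) := isProbabilityMeasure_altMeasure hm i
  have : NeZero m := ⟨by omega⟩
  rw [show {x : ι → Fin m | ∀ k, x k ≠ i} = Set.univ.pi fun _ => {i}ᶜ by ext; simp,
    Measure.restrict_pi_pi, nullMeasure_restrict_compl_singleton hm, pi_const_smul]
  exact ENNReal.div_ne_top (natCast_ne_top _) (Nat.cast_ne_zero.mpr (by omega))

theorem nullSample_coe_finset {ι : Type*} [Fintype ι] {m : ℕ} [NeZero m]
    (s : Finset (ι → Fin m)) :
    Measure.pi (fun _ : ι => nullMeasure m) s = #s * (m : ℝ≥0∞)⁻¹ ^ Fintype.card ι := by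
  rw [nullMeasure, pi_const_smul _ (inv_ne_top.mpr (NeZero.ne _)), Measure.smul_apply,
    ← sum_measure_singleton]
  simp [mul_comm]

-- `m - j` truncates only where `m.choose j = 0`.
noncomputable def bonferroniSum (m N L : ℕ) : ℝ :=
  ∑ j ∈ range (L + 1), (-1) ^ j * m.choose j * (((m - j : ℕ) : ℝ) / m) ^ N

theorem nullSample_real_surjective_le {ι : Type*} [Fintype ι] [DecidableEq ι] {m L : ℕ}
    [NeZero m] (hL : Even L) :
    (Measure.pi fun _ : ι => nullMeasure m).real {x | Surjective x}
      ≤ bonferroniSum m (Fintype.card ι) L := by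
  have hcard := card_surjective_le_of_even (ι := ι) (α := Fin m) hL
  rw [Fintype.card_fin] at hcard
  rw [← coe_filter_univ, measureReal_def, nullSample_coe_finset, toReal_mul, toReal_pow,
    toReal_inv, toReal_natCast, toReal_natCast, bonferroniSum]
  calc (#{x : ι → Fin m | Surjective x} : ℝ) * ((m : ℝ)⁻¹) ^ Fintype.card ι
      ≤ (∑ j ∈ range (L + 1), (-1) ^ j * m.choose j * ((m - j : ℕ) : ℝ) ^ Fintype.card ι)
          * ((m : ℝ)⁻¹) ^ Fintype.card ι := by
        gcongr
        exact_mod_cast hcard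
    _ = _ := by
        rw [sum_mul]
        refine sum_congr rfl fun j _ => ?_
        rw [div_pow, div_eq_mul_inv, inv_pow]
        ring

theorem nullSample_compl_surjective_le {ι : Type*} [Fintype ι] {m : ℕ} (hm : 1 < m)
    (hN : (((m - 1 : ℕ) : ℝ≥0∞) / m) ^ Fintype.card ι ≤ (m : ℝ≥0∞)⁻¹) (A : Set (ι → Fin m)) :
    (Measure.pi fun _ : ι => nullMeasure m) {x | Surjective x}ᶜ
      ≤ Measure.pi (fun _ => nullMeasure m) A
        + (m : ℝ≥0∞)⁻¹ * ∑ i, Measure.pi (fun _ => altMeasure m i) Aᶜ := by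
  set P₀ := Measure.pi fun _ : ι => nullMeasure m
  have hcover : {x | Surjective x}ᶜ ⊆ A ∪ ⋃ i, Aᶜ ∩ {x : ι → Fin m | ∀ k, x k ≠ i} := by
    intro x hx
    obtain ⟨i, hi⟩ := not_forall.mp hx
    by_cases hA : x ∈ A
    · exact Or.inl hA
    · exact Or.inr (Set.mem_iUnion.mpr ⟨i, hA, fun k hk => hi ⟨k, hk⟩⟩)
  calc P₀ {x | Surjective x}ᶜ ≤ P₀ A + ∑ i, P₀ (Aᶜ ∩ {x | ∀ k, x k ≠ i}) :=
        (measure_mono hcover).trans <|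
          (measure_union_le _ _).trans (add_le_add le_rfl (measure_iUnion_fintype_le _ _))
    _ = P₀ A + ∑ i, (((m - 1 : ℕ) : ℝ≥0∞) / m) ^ Fintype.card ι
          * Measure.pi (fun _ => altMeasure m i) Aᶜ := by
        refine congrArg _ (sum_congr rfl fun i _ => ?_)
        rw [← Measure.restrict_apply' (Set.toFinite _).measurableSet, nullSample_restrict_avoid hm]
        rfl
    _ ≤ _ := by
        rw [mul_sum]
        gcongr

noncomputable def testRisk (m n : ℕ) (A : Set (Fin n → Fin m)) : ℝ≥0∞ :=
  Measure.pi (fun _ => nullMeasure m) A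
    + (m : ℝ≥0∞)⁻¹ * ∑ i, Measure.pi (fun _ => altMeasure m i) Aᶜ

theorem testRisk_preimage_comp_castLE {m n N : ℕ} (hm : 1 < m) (h : n ≤ N)
    (A : Set (Fin n → Fin m)) :
    testRisk m N ((· ∘ Fin.castLE h) ⁻¹' A) = testRisk m n A := by
  have : NeZero m := ⟨by omega⟩
  have := isProbabilityMeasure_altMeasure hm
  have hpres (μ : Measure (Fin m)) [IsProbabilityMeasure μ] (B : Set (Fin n → Fin m)) :
      Measure.pi (fun _ => μ) ((· ∘ Fin.castLE h) ⁻¹' B) = Measure.pi (fun _ => μ) B :=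
    (measurePreserving_comp_right_of_injective μ (Fin.castLE_injective h)).measure_preimage
      (Set.toFinite B).measurableSet.nullMeasurableSet
  simp only [testRisk, ← Set.preimage_compl, hpres]

theorem ofReal_one_sub_bonferroniSum_le_testRisk {m n N L : ℕ} (hm : 1 < m)
    (hN : (((m - 1 : ℕ) : ℝ≥0∞) / m) ^ N ≤ (m : ℝ≥0∞)⁻¹) (hnN : n ≤ N) (hL : Even L)
    (A : Set (Fin n → Fin m)) :
    ENNReal.ofReal (1 - bonferroniSum m N L) ≤ testRisk m n A := by
  have : NeZero m := ⟨by omega⟩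
  rw [← testRisk_preimage_comp_castLE hm hnN]
  have hcompl := nullSample_compl_surjective_le hm (ι := Fin N) (by rwa [Fintype.card_fin])
  refine le_trans ?_ (hcompl _)
  refine ENNReal.ofReal_le_of_le_toReal ?_
  rw [← measureReal_def, probReal_compl_eq_one_sub (Set.toFinite _).measurableSet]
  have := nullSample_real_surjective_le (ι := Fin N) (m := m) hL
  rw [Fintype.card_fin] at this
  linarith

theorem testRisk_le_two_mul_max {m n : ℕ} (hm : m ≠ 0) (Nhat : (Fin n → Fin m) → ℕ) :
    testRisk m n {x | Nhat x ≠ m}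
      ≤ 2 * max (Measure.pi (fun _ => nullMeasure m) {x | Nhat x ≠ m})
          (⨆ i, Measure.pi (fun _ => altMeasure m i) {x | Nhat x ≠ m - 1}) := by
  set a := Measure.pi (fun _ => nullMeasure m) {x | Nhat x ≠ m}
  set S := ⨆ i, Measure.pi (fun _ => altMeasure m i) {x | Nhat x ≠ m - 1}
  have hS (i : Fin m) : Measure.pi (fun _ => altMeasure m i) {x | Nhat x ≠ m}ᶜ ≤ S :=
    (measure_mono fun x hx => show Nhat x ≠ m - 1 by
      rw [Set.mem_compl_iff, Set.mem_ofPred_eq, not_not] at hx; omega).trans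
      (le_iSup (fun i => Measure.pi (fun _ => altMeasure m i) {x | Nhat x ≠ m - 1}) i)
  calc testRisk m n {x | Nhat x ≠ m} ≤ a + (m : ℝ≥0∞)⁻¹ * ∑ _i : Fin m, S := by
        unfold testRisk
        gcongr with i
        exact hS i
    _ = a + S := by
        rw [sum_const, card_univ, Fintype.card_fin, nsmul_eq_mul, ← mul_assoc,
          ENNReal.inv_mul_cancel (Nat.cast_ne_zero.mpr hm) (natCast_ne_top m), one_mul]
    _ ≤ max a S + max a S := add_le_add (le_max_left a S) (le_max_right a S)
    _ = 2 * max a S := (two_mul _).symm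

noncomputable def sampleSize (δ : ℝ) (m : ℕ) : ℕ := ⌈m * Real.log (m / δ)⌉₊

section Asymptotics

variable {δ : ℝ}

theorem le_sampleSize (m : ℕ) : m * Real.log (m / δ) ≤ sampleSize δ m := Nat.le_ceil _

theorem sampleSize_le (hδ0 : 0 < δ) (hδ1 : δ ≤ 1) {m : ℕ} (hm : 1 ≤ m) :
    (sampleSize δ m : ℝ) ≤ m * Real.log (m / δ) + 1 := by
  refine (Nat.ceil_lt_add_one (mul_nonneg (Nat.cast_nonneg m) (log_nonneg ?_))).le
  rw [le_div_iff₀ hδ0, one_mul]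
  exact hδ1.trans (by exact_mod_cast hm)

theorem log_pow_mul_one_sub_pow_sampleSize_le (hδ0 : 0 < δ) {j m : ℕ} (hjm : j < m) :
    j * Real.log m + sampleSize δ m * Real.log (1 - j / m) ≤ j * Real.log δ := by
  have hm : (0 : ℝ) < m := by exact_mod_cast (Nat.zero_le j).trans_lt hjm
  have hx : 0 < 1 - (j : ℝ) / m := by rw [sub_pos, div_lt_one hm]; exact_mod_cast hjm
  calc j * Real.log m + sampleSize δ m * Real.log (1 - j / m)
      ≤ j * Real.log m + m * Real.log (m / δ) * (-(j / m)) := by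
        gcongr (j : ℝ) * Real.log m + ?_
        refine (mul_le_mul_of_nonneg_left ((log_le_sub_one_of_pos hx).trans_eq
          (by ring : 1 - (j : ℝ) / m - 1 = -(j / m)))
          (Nat.cast_nonneg _)).trans ?_
        exact mul_le_mul_of_nonpos_right (le_sampleSize m) (neg_nonpos.mpr (by positivity))
    _ = j * Real.log δ := by
        rw [Real.log_div hm.ne' hδ0.ne']
        field_simp
        ring

theorem le_log_pow_mul_one_sub_pow_sampleSize (hδ0 : 0 < δ) (hδ1 : δ ≤ 1) {j m : ℕ}
    (hjm : j < m) :
    j * Real.log δ + (j ^ 2 * Real.log δ - j) / (m - j) - j ^ 2 * Real.log m / (m - j)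
      ≤ j * Real.log m + sampleSize δ m * Real.log (1 - j / m) := by
  have hm : (0 : ℝ) < m := by exact_mod_cast (Nat.zero_le j).trans_lt hjm
  have hmj : (0 : ℝ) < m - j := by rw [sub_pos]; exact_mod_cast hjm
  have hx : 0 < 1 - (j : ℝ) / m := by rw [sub_pos, div_lt_one hm]; exact_mod_cast hjm
  have hlog : -(j / (m - j)) ≤ Real.log (1 - j / m) := by
    refine le_of_eq_of_le ?_ (one_sub_inv_le_log_of_pos hx)
    field_simp
    ring
  calc j * Real.log δ + (j ^ 2 * Real.log δ - j) / (m - j) - j ^ 2 * Real.log m / (m - j)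
      = j * Real.log m + (m * Real.log (m / δ) + 1) * (-(j / (m - j))) := by
        rw [Real.log_div hm.ne' hδ0.ne']
        field_simp
        ring
    _ ≤ j * Real.log m + sampleSize δ m * Real.log (1 - j / m) := by
        gcongr (j : ℝ) * Real.log m + ?_
        refine (mul_le_mul_of_nonpos_right (sampleSize_le hδ0 hδ1 (Nat.one_le_of_lt hjm))
          (neg_nonpos.mpr (by positivity))).trans ?_
        exact mul_le_mul_of_nonneg_left hlog (Nat.cast_nonneg _)

theorem tendsto_pow_mul_one_sub_div_pow_sampleSize (hδ0 : 0 < δ) (hδ1 : δ ≤ 1) (j : ℕ) :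
    Tendsto (fun m : ℕ => (m : ℝ) ^ j * (1 - j / m) ^ sampleSize δ m) atTop (𝓝 (δ ^ j)) := by
  have hlower : Tendsto (fun m : ℕ => j * Real.log δ + (j ^ 2 * Real.log δ - j) / (m - j)
      - j ^ 2 * Real.log m / (m - j)) atTop (𝓝 (j * Real.log δ)) := by
    have h0 := tendsto_pow_log_div_mul_add_atTop 1 (-j) 0 one_ne_zero
    have h1 := tendsto_pow_log_div_mul_add_atTop 1 (-j) 1 one_ne_zero
    have := (((h0.const_mul (j ^ 2 * Real.log δ - j)).const_add (j * Real.log δ)).sub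
      (h1.const_mul (j ^ 2 : ℝ))).comp tendsto_natCast_atTop_atTop
    simp only [mul_zero, add_zero, sub_zero] at this
    refine this.congr fun m => ?_
    simp only [comp_apply, pow_zero, pow_one, one_mul, ← sub_eq_add_neg, mul_div_assoc', mul_one]
  have hlog : Tendsto (fun m : ℕ => j * Real.log m + sampleSize δ m * Real.log (1 - j / m))
      atTop (𝓝 (j * Real.log δ)) :=
    tendsto_of_tendsto_of_tendsto_of_le_of_le' hlower tendsto_const_nhds
      ((eventually_gt_atTop j).mono fun m => le_log_pow_mul_one_sub_pow_sampleSize hδ0 hδ1)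
      ((eventually_gt_atTop j).mono fun m => log_pow_mul_one_sub_pow_sampleSize_le hδ0)
  rw [← exp_log (pow_pos hδ0 j), Real.log_pow]
  refine ((Real.continuous_exp.tendsto _).comp hlog).congr' ?_
  filter_upwards [eventually_gt_atTop j] with m hjm
  have hm : (0 : ℝ) < m := by exact_mod_cast (Nat.zero_le j).trans_lt hjm
  have hx : 0 < 1 - (j : ℝ) / m := by rw [sub_pos, div_lt_one hm]; exact_mod_cast hjm
  rw [comp_apply, exp_add, ← Real.log_pow, ← Real.log_pow, exp_log (pow_pos hm j),
    exp_log (pow_pos hx _)]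

theorem tendsto_choose_mul_pow_sampleSize (hδ0 : 0 < δ) (hδ1 : δ ≤ 1) (j : ℕ) :
    Tendsto (fun m : ℕ => (m.choose j : ℝ) * (((m - j : ℕ) : ℝ) / m) ^ sampleSize δ m) atTop
      (𝓝 (δ ^ j / j.factorial)) := by
  have hequiv : (fun m : ℕ => (m.choose j : ℝ) * (((m - j : ℕ) : ℝ) / m) ^ sampleSize δ m)
      ~[atTop] fun m : ℕ => (m : ℝ) ^ j / j.factorial * (((m - j : ℕ) : ℝ) / m) ^ sampleSize δ m :=
    (isEquivalent_choose j).mul IsEquivalent.refl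
  rw [hequiv.tendsto_nhds_iff]
  refine ((tendsto_pow_mul_one_sub_div_pow_sampleSize hδ0 hδ1 j).div_const _).congr' ?_
  filter_upwards [eventually_gt_atTop j] with m hjm
  have hm : (m : ℝ) ≠ 0 := by exact_mod_cast (Nat.zero_le j).trans_lt hjm |>.ne'
  rw [Nat.cast_sub hjm.le]
  field_simp

theorem div_pow_sampleSize_le (hδ0 : 0 < δ) (hδ1 : δ ≤ 1) {m : ℕ} (hm : 1 ≤ m) :
    (((m - 1 : ℕ) : ℝ≥0∞) / m) ^ sampleSize δ m ≤ (m : ℝ≥0∞)⁻¹ := by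
  have hm' : (0 : ℝ) < m := by exact_mod_cast hm
  have hreal : (((m - 1 : ℕ) : ℝ) / m) ^ sampleSize δ m ≤ 1 / m :=
    calc (((m - 1 : ℕ) : ℝ) / m) ^ sampleSize δ m ≤ Real.exp (-(1 / m)) ^ sampleSize δ m := by
          gcongr
          rw [Nat.cast_sub hm, Nat.cast_one, sub_div, div_self hm'.ne']
          exact one_sub_le_exp_neg _
      _ = Real.exp (-(sampleSize δ m / m)) := by rw [← Real.exp_nat_mul]; ring_nf
      _ ≤ Real.exp (-Real.log (m / δ)) := by
          gcongr
          rw [le_div_iff₀ hm', mul_comm]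
          exact le_sampleSize m
      _ = δ / m := by rw [Real.exp_neg, exp_log (by positivity), inv_div]
      _ ≤ 1 / m := by gcongr
  calc (((m - 1 : ℕ) : ℝ≥0∞) / m) ^ sampleSize δ m
      = ENNReal.ofReal ((((m - 1 : ℕ) : ℝ) / m) ^ sampleSize δ m) := by
        rw [ENNReal.ofReal_pow (by positivity), ENNReal.ofReal_div_of_pos hm', ofReal_natCast,
          ofReal_natCast]
    _ ≤ ENNReal.ofReal (1 / m) := ENNReal.ofReal_le_ofReal hreal
    _ = (m : ℝ≥0∞)⁻¹ := by rw [one_div, ENNReal.ofReal_inv_of_pos hm', ofReal_natCast]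

theorem mul_log_add_mul_log_le_sampleSize (hδ0 : 0 < δ) {m : ℕ} (hm : m ≠ 0) :
    m * Real.log m + m * Real.log (1 / δ) ≤ sampleSize δ m := by
  refine le_of_eq_of_le ?_ (le_sampleSize m)
  rw [Real.log_div (Nat.cast_ne_zero.mpr hm) hδ0.ne', one_div, Real.log_inv]
  ring

theorem tendsto_bonferroniSum_sampleSize (hδ0 : 0 < δ) (hδ1 : δ ≤ 1) (L : ℕ) :
    Tendsto (fun m => bonferroniSum m (sampleSize δ m) L) atTop
      (𝓝 (∑ j ∈ range (L + 1), (-δ) ^ j / j.factorial)) :=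
  tendsto_finsetSum _ fun j _ => by
    convert (tendsto_choose_mul_pow_sampleSize hδ0 hδ1 j).const_mul ((-1 : ℝ) ^ j) using 1
    · exact funext fun m => mul_assoc _ _ _
    · rw [neg_pow, mul_div_assoc]

theorem exists_even_sum_range_pow_div_factorial_lt (hδ0 : 0 < δ) (hδ1 : δ < 1) :
    ∃ L, Even L ∧ ∑ j ∈ range (L + 1), (-δ) ^ j / j.factorial < 1 - (1 - Real.exp (-1)) * δ := by
  have hconvex : Real.exp (-δ) < 1 - (1 - Real.exp (-1)) * δ := by
    have := strictConvexOn_exp.2 (Set.mem_univ 0) (Set.mem_univ (-1)) (by norm_num)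
      (sub_pos.mpr hδ1) hδ0 (by ring)
    simp only [smul_eq_mul, mul_zero, zero_add, mul_neg, mul_one, Real.exp_zero] at this
    linarith
  have hseries : Tendsto (fun L => ∑ j ∈ range (L + 1), (-δ) ^ j / j.factorial) atTop
      (𝓝 (Real.exp (-δ))) := by
    rw [Real.exp_eq_exp_ℝ]
    exact (NormedSpace.expSeries_div_hasSum_exp (-δ)).tendsto_sum_nat.comp
      (tendsto_add_atTop_nat 1)
  obtain ⟨L₀, hL₀⟩ := eventually_atTop.mp (hseries.eventually_lt_const hconvex)
  exact ⟨2 * L₀, even_two_mul L₀, hL₀ _ (by omega)⟩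

end Asymptotics

theorem ofReal_le_liminf_of_tendsto {u : ℕ → ℝ} {v : ℕ → ℝ≥0∞} {a l : ℝ}
    (hu : Tendsto u atTop (𝓝 l)) (hal : a ≤ l)
    (huv : ∀ᶠ m in atTop, ENNReal.ofReal (u m) ≤ v m) :
    ENNReal.ofReal a ≤ liminf v atTop :=
  (ENNReal.ofReal_le_ofReal hal).trans <|
    ((ENNReal.continuous_ofReal.tendsto l).comp hu).liminf_eq ▸ liminf_le_liminf huv

end HomologyInference

open HomologyInference

/-- Sample complexity lower bound for homology inference (combinatorial core):
fix `δ ∈ (0,1)`.  Model: `P₀` is uniform over `m` equal-mass components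
(represented by their labels, so `P₀ = (1/m)·count` on `Fin m`), and the `i`-th
alternative `P₁ i = (1/(m-1))·count⌞{i}ᶜ` is `P₀` conditioned on missing
component `i`; under `P₀` the null manifold has `m` connected components and
under each alternative it has `m - 1`.  If the sample size satisfies
`n(m) ≤ m·log m + m·log(1/δ)`, then (1) the optimal total risk (Type I plus
average Type II error under the uniform prior) of any test between `H₀` and the
uniform mixture of the `m` one-component-removed alternatives is at least
`(1 - e⁻¹)·δ` in the limit `m → ∞`, and (2) the minimax risk for estimating the
number of connected components is at least `((1 - e⁻¹)/2)·δ` in the limit. -/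
theorem homology_inference_lower_bound (δ : ℝ) (hδ0 : 0 < δ) (hδ1 : δ < 1)
    (n : ℕ → ℕ)
    (hn : ∀ m : ℕ, (n m : ℝ) ≤ (m : ℝ) * Real.log m + (m : ℝ) * Real.log (1 / δ)) :
    ENNReal.ofReal ((1 - Real.exp (-1)) * δ) ≤
      Filter.liminf
        (fun m : ℕ =>
          ⨅ A : Set (Fin (n m) → Fin m),
            (Measure.pi fun _ : Fin (n m) => ((m : ℝ≥0∞)⁻¹ • Measure.count : Measure (Fin m))) A +
              (m : ℝ≥0∞)⁻¹ * ∑ i : Fin m,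
                (Measure.pi fun _ : Fin (n m) =>
                  (((m - 1 : ℕ) : ℝ≥0∞)⁻¹ • Measure.count.restrict {i}ᶜ : Measure (Fin m))) Aᶜ)
        atTop ∧
    ENNReal.ofReal ((1 - Real.exp (-1)) / 2 * δ) ≤
      Filter.liminf
        (fun m : ℕ =>
          ⨅ Nhat : (Fin (n m) → Fin m) → ℕ,
            max
              ((Measure.pi fun _ : Fin (n m) => ((m : ℝ≥0∞)⁻¹ • Measure.count : Measure (Fin m)))
                {x | Nhat x ≠ m})
              (⨆ i : Fin m,
                (Measure.pi fun _ : Fin (n m) =>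
                  (((m - 1 : ℕ) : ℝ≥0∞)⁻¹ • Measure.count.restrict {i}ᶜ : Measure (Fin m)))
                  {x | Nhat x ≠ m - 1}))
        atTop := by
  obtain ⟨L, hL, hLδ⟩ := exists_even_sum_range_pow_div_factorial_lt hδ0 hδ1
  have hlim :=
    (tendsto_const_nhds (x := (1 : ℝ))).sub (tendsto_bonferroniSum_sampleSize hδ0 hδ1.le L)
  have hrisk : ∀ᶠ m in atTop, ∀ A,
      ENNReal.ofReal (1 - bonferroniSum m (sampleSize δ m) L) ≤ testRisk m (n m) A :=
    (eventually_gt_atTop 1).mono fun m hm =>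
      ofReal_one_sub_bonferroniSum_le_testRisk hm (div_pow_sampleSize_le hδ0 hδ1.le hm.le)
        (Nat.cast_le.mp ((hn m).trans (mul_log_add_mul_log_le_sampleSize hδ0 (by omega)))) hL
  refine ⟨ofReal_le_liminf_of_tendsto hlim (by linarith) (hrisk.mono fun m h => le_iInf h),
    ofReal_le_liminf_of_tendsto (hlim.div_const 2) (by linarith)
      ((hrisk.and (eventually_gt_atTop 1)).mono fun m ⟨h, hm⟩ => le_iInf fun Nhat => ?_)⟩
  rw [ENNReal.ofReal_div_of_pos two_pos, ofReal_ofNat]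
  exact ENNReal.div_le_of_le_mul' ((h _).trans (testRisk_le_two_mul_max (by omega) Nhat))
end
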